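/- If the optimal value of min{κ(x) : x ∈ X} is 0, then the gauge dual problem min{κ°(y) : y ∈ X'} is essentially infeasible, i.e., κ°(y) = +∞ for every y ∈ X'. -/
import Mathlib


open scoped RealInnerProductSpace

/-- A gauge function on ℝⁿ: nonnegative, convex, positively homogeneous, vanishing at 0. -/
def IsGauge {n : ℕ} (κ : EuclideanSpace ℝ (Fin n) → EReal) : Prop :=
  (∀ x, 0 ≤ κ x) ∧
  (∀ x y : EuclideanSpace ℝ (Fin n), ∀ a b : ℝ, 0 ≤ a → 0 ≤ b → a + b = 1 →
    κ (a • x + b • y) ≤ (a : EReal) * κ x + (b : EReal) * κ y) ∧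
  (∀ (c : ℝ) (x : EuclideanSpace ℝ (Fin n)), 0 < c → κ (c • x) = (c : EReal) * κ x) ∧
  κ 0 = 0

/-- The polar of a gauge: κ°(y) = inf {μ > 0 : ⟨x,y⟩ ≤ μ κ(x) for all x}. -/
noncomputable def gaugePolar {n : ℕ} (κ : EuclideanSpace ℝ (Fin n) → EReal)
    (y : EuclideanSpace ℝ (Fin n)) : EReal :=
  sInf {t : EReal | ∃ μ : ℝ, 0 < μ ∧ t = (μ : EReal) ∧
    ∀ x : EuclideanSpace ℝ (Fin n), ((⟪x, y⟫ : ℝ) : EReal) ≤ (μ : EReal) * κ x}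

/-- The antipolar of a set X ⊆ ℝⁿ: X' = {y : ⟨x,y⟩ ≥ 1 for all x ∈ X}. -/
def antipolar {n : ℕ} (X : Set (EuclideanSpace ℝ (Fin n))) : Set (EuclideanSpace ℝ (Fin n)) :=
  {y | ∀ x ∈ X, 1 ≤ (⟪x, y⟫ : ℝ)}

/-- If the primal optimal value is 0 then the gauge dual is essentially infeasible. -/
theorem gauge_dual_essentially_infeasible {n : ℕ} (κ : EuclideanSpace ℝ (Fin n) → EReal)
    (hκ : IsGauge κ) (X : Set (EuclideanSpace ℝ (Fin n)))
    (hXc : IsClosed X) (hXconv : Convex ℝ X)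
    (hval : sInf (κ '' X) = 0) :
    ∀ y ∈ antipolar X, gaugePolar κ y = ⊤ := by
  intro y hy
  rw [gaugePolar, sInf_eq_top]
  rintro t ⟨μ, hμ, rfl, hall⟩
  -- every x ∈ X has κ x ≥ 1/μ
  have hlb : ∀ a ∈ κ '' X, ((1 : EReal) / (μ : EReal)) ≤ a := by
    rintro a ⟨x, hx, rfl⟩
    rw [EReal.div_le_iff_le_mul (by exact_mod_cast hμ) (by simp)]
    exact le_trans (by exact_mod_cast hy x hx) (hall x)
  have h0 : ((1 : EReal) / (μ : EReal)) ≤ 0 := hval ▸ le_sInf hlb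
  have : (0 : EReal) < (1 : EReal) / (μ : EReal) := by
    rw [show ((1:EReal)/(μ:EReal)) = ((1/μ : ℝ) : EReal) by
      rw [EReal.coe_div]; norm_num]
    exact_mod_cast one_div_pos.mpr hμ
  exact absurd (lt_of_lt_of_le this h0) (lt_irrefl _)
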